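/- Let G(E) be a well-formed TFG for (N1,m1) ▷_E (N2,m2). If (N1,m1) is safe (1-bounded), then (N2,m2) is safe. -/

import Mathlib

open Finset

/-- A Petri net over a type of places `P`. -/
structure PetriNet (P : Type) where
  Trans : Type
  pre : Trans → P → ℕ
  post : Trans → P → ℕ

/-- Firing relation between markings. -/
def PetriNet.fire {P : Type} (N : PetriNet P) (m m' : P → ℕ) : Prop :=
  ∃ t : N.Trans, (∀ p, N.pre t p ≤ m p) ∧ ∀ p, m' p = m p - N.pre t p + N.post t p

/-- Reachability of a marking from an initial one. -/
def PetriNet.reach {P : Type} (N : PetriNet P) (m0 m : P → ℕ) : Prop :=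
  Relation.ReflTransGen N.fire m0 m

/-- A marked net is safe (1-bounded) when every reachable marking has at most one token per place. -/
def PetriNet.Safe {P : Type} (N : PetriNet P) (m0 : P → ℕ) : Prop :=
  ∀ m, N.reach m0 m → ∀ p, m p ≤ 1

/-- Two places are concurrent when some reachable marking marks both positively. -/
def PetriNet.ConcPlaces {P : Type} (N : PetriNet P) (m0 : P → ℕ) (p q : P) : Prop :=
  ∃ m, N.reach m0 m ∧ 0 < m p ∧ 0 < m q

/-- A Token Flow Graph: redundancy arcs `R`, agglomeration arcs `A` (disjoint from `R`,
enforced in well-formedness), and constant nodes given by `kval`. -/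
structure TFG (V : Type) [DecidableEq V] where
  R : Finset (V × V)
  A : Finset (V × V)
  kval : V → Option ℕ

variable {V : Type} [DecidableEq V]

def TFG.Edge (G : TFG V) (v w : V) : Prop := (v, w) ∈ G.R ∨ (v, w) ∈ G.A

/-- `G.Reach v w` means `v →* w`. -/
def TFG.Reach (G : TFG V) : V → V → Prop := Relation.ReflTransGen G.Edge

/-- Successor set `succ(v)` (includes `v` itself). -/
def TFG.succs (G : TFG V) (v : V) : Set V := {w | G.Reach v w}

/-- A root has no incoming arc. -/
def TFG.IsRoot (G : TFG V) (v : V) : Prop := ∀ w, ¬ G.Edge w v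

/-- A ∘-leaf has no outgoing agglomeration arc. -/
def TFG.IsCircLeaf (G : TFG V) (v : V) : Prop := ∀ w, (v, w) ∉ G.A

/-- The set `X` such that `v ∘→ X` (agglomeration children of `v`). -/
def TFG.aggChildren (G : TFG V) (v : V) : Finset V :=
  (G.A.filter (fun e => e.1 = v)).image Prod.snd

/-- The set `X` such that `X →• v` (redundancy parents of `v`). -/
def TFG.redParents (G : TFG V) (v : V) : Finset V :=
  (G.R.filter (fun e => e.2 = v)).image Prod.fst

/-- A configuration is a partial valuation of the nodes; it must agree with constant nodes. -/
def TFG.IsConfig (G : TFG V) (c : V → Option ℕ) : Prop :=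
  ∀ v n, G.kval v = some n → c v = some n

/-- A configuration is total when it is defined on every node. -/
def TotalConf (c : V → Option ℕ) : Prop := ∀ v, c v ≠ none

/-- Value of a configuration at a node (0 if undefined). -/
def cval (c : V → Option ℕ) (v : V) : ℕ := (c v).getD 0

/-- Well-definedness of a configuration: conditions (CBot) and (CEq). -/
def TFG.WellDef (G : TFG V) (c : V → Option ℕ) : Prop :=
  (∀ v w, G.Edge v w → (c v = none ↔ c w = none)) ∧
  (∀ v n, c v = some n →
    ((G.aggChildren v).Nonempty → n = ∑ w ∈ G.aggChildren v, cval c w) ∧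
    ((G.redParents v).Nonempty → n = ∑ w ∈ G.redParents v, cval c w))

/-- A system of reduction equations: `(v, X)` stands for the equation `v = ∑_{w ∈ X} w`. -/
abbrev EqSys (V : Type) := Finset (V × Finset V)

/-- A (non-negative integer) solution of the system `E`. -/
def Solves (E : EqSys V) (s : V → ℕ) : Prop :=
  ∀ e ∈ E, s e.1 = ∑ w ∈ e.2, s w

/-- `E, ⟦c⟧` is consistent: some solution of `E` extends the partial valuation `c`. -/
def ConsistentWith (E : EqSys V) (c : V → Option ℕ) : Prop :=
  ∃ s : V → ℕ, Solves E s ∧ ∀ v n, c v = some n → s v = n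

/-- Variables occurring in `E`. -/
def fvars (E : EqSys V) : Set V := {v | ∃ e ∈ E, v = e.1 ∨ v ∈ e.2}

/-- View a marking over the set of places `P` as a partial configuration over `V`. -/
def mconf (P : Set V) [DecidablePred (· ∈ P)] (m : ↥P → ℕ) : V → Option ℕ :=
  fun v => if h : v ∈ P then some (m ⟨v, h⟩) else none

/-- Restriction of a configuration to a set of places, seen as a marking. -/
def restrict (c : V → Option ℕ) (P : Set V) : ↥P → ℕ := fun p => cval c ↑p

/-- Compatibility `c ≡ m` of a configuration with a marking on `P`. -/
def CompatM (c : V → Option ℕ) (P : Set V) (m : ↥P → ℕ) : Prop :=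
  ∀ p : ↥P, c ↑p = some (m p)

/-- A solution of `E` agrees with a marking on `P`. -/
def AgreesOn (s : V → ℕ) (P : Set V) (m : ↥P → ℕ) : Prop := ∀ p : ↥P, s ↑p = m p

/-- `E`-equivalence `(N1,m1) ▷_E (N2,m2)`: conditions (A1), (A2), (A3). -/
structure EEquiv (E : EqSys V) (P1 P2 : Set V)
    (N1 : PetriNet ↥P1) (m1 : ↥P1 → ℕ) (N2 : PetriNet ↥P2) (m2 : ↥P2 → ℕ) : Prop where
  A1l : ∀ m, N1.reach m1 m → ∃ s, Solves E s ∧ AgreesOn s P1 m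
  A1r : ∀ m, N2.reach m2 m → ∃ s, Solves E s ∧ AgreesOn s P2 m
  A2 : ∃ s, Solves E s ∧ AgreesOn s P1 m1 ∧ AgreesOn s P2 m2
  A3 : ∀ m1' m2', (∃ s, Solves E s ∧ AgreesOn s P1 m1' ∧ AgreesOn s P2 m2') →
      (N1.reach m1 m1' ↔ N2.reach m2 m2')

/-- Well-formedness of a TFG for an equivalence statement: conditions (T1)–(T6). -/
structure WellFormed (G : TFG V) (E : EqSys V) (P1 P2 : Set V) : Prop where
  T1 : {v | G.kval v = none} = P1 ∪ P2 ∪ fvars E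
  T2 : ∀ v, G.kval v ≠ none → G.IsRoot v
  T3a : ∀ p p' q, (p, q) ∈ G.A → G.Edge p' q → p' = p
  T3b : ∀ p q, ¬((p, q) ∈ G.R ∧ (p, q) ∈ G.A)
  T4 : ∀ v X, ((X = G.aggChildren v ∨ X = G.redParents v) ∧ X.Nonempty) ↔ (v, X) ∈ E
  T5 : ∀ v, ¬ Relation.TransGen G.Edge v v
  T6root : ∀ v, G.kval v = none → (G.IsRoot v ↔ v ∈ P2)
  T6leaf : ∀ v, G.kval v = none → (G.IsCircLeaf v ↔ v ∈ P1)

/-- Node concurrency relation of the TFG: both nodes are positive in some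
total, well-defined configuration whose restriction to `N2` is reachable. -/
def NodeConc (G : TFG V) (P2 : Set V) [DecidablePred (· ∈ P2)]
    (N2 : PetriNet ↥P2) (m2 : ↥P2 → ℕ) (v w : V) : Prop :=
  ∃ c, G.IsConfig c ∧ TotalConf c ∧ G.WellDef c ∧ N2.reach m2 (restrict c P2) ∧
    0 < cval c v ∧ 0 < cval c w

/-! A reachable marking of `N2` with two tokens on a place extends, by (A1), to a solution `s` of
`E` whose restriction to `N1` is reachable by (A3), so `s ≤ 1` on the places of `N1`. Following
agglomeration arcs down from the doubly marked place, the surplus must therefore split at some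
agglomeration node into two marked children `w1 ≠ w2`. Pushing one token from `w1` down the graph
(within the capacities `s`, so that it ends on a place of `N1` already marked by `s`) and withdrawing
one token from `w2` in the same way gives another solution of `E`. It agrees with `s` on the roots,
i.e. on `P2`, but puts two tokens on a place of `N1`; by (A3) its restriction is reachable in `N1`,
contradicting safeness. -/

open Relation

theorem wellFounded_of_acyclic {α : Type*} {r : α → α → Prop} {S : Set α} (hS : S.Finite)
    (hrS : ∀ a b, r a b → a ∈ S ∧ b ∈ S) (hr : ∀ a, ¬ TransGen r a a) : WellFounded r := by
  have : IsStrictOrder α (TransGen r) := { irrefl := hr, trans := fun _ _ _ => TransGen.trans }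
  have h := hS.wellFoundedOn (r := TransGen r)
  rw [Set.wellFoundedOn_iff] at h
  exact Subrelation.wf (fun {a b} hab => ⟨TransGen.single hab, hrS a b hab⟩) h

theorem exists_le_sum_eq_min {α : Type*} (cap : α → ℕ) (X : Finset α) (n : ℕ) :
    ∃ g, g ≤ cap ∧ ∑ c ∈ X, g c = min n (∑ c ∈ X, cap c) := by
  classical
  induction X using Finset.induction_on generalizing n with
  | empty => exact ⟨0, fun _ => Nat.zero_le _, by simp⟩
  | insert a X ha ih =>
    obtain ⟨g, hg, hsum⟩ := ih (n - cap a)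
    refine ⟨Function.update g a (min n (cap a)), fun c => ?_, ?_⟩
    · rcases eq_or_ne c a with rfl | hc
      · simp
      · simpa [hc] using hg c
    · rw [sum_insert ha, sum_insert ha, sum_update_of_notMem ha, hsum, Function.update_self]
      omega

noncomputable def allocate {α : Type*} (cap : α → ℕ) (X : Finset α) (n : ℕ) : α → ℕ :=
  (exists_le_sum_eq_min cap X n).choose

theorem allocate_le {α : Type*} (cap : α → ℕ) (X : Finset α) (n : ℕ) : allocate cap X n ≤ cap :=
  (exists_le_sum_eq_min cap X n).choose_spec.1

theorem sum_allocate {α : Type*} (cap : α → ℕ) (X : Finset α) (n : ℕ) :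
    ∑ c ∈ X, allocate cap X n c = min n (∑ c ∈ X, cap c) :=
  (exists_le_sum_eq_min cap X n).choose_spec.2

theorem allocate_zero {α : Type*} {cap : α → ℕ} {X : Finset α} {c : α} (hc : c ∈ X) :
    allocate cap X 0 c = 0 :=
  sum_eq_zero_iff.mp ((sum_allocate cap X 0).trans (Nat.zero_min _)) c hc

namespace TFG

variable {G : TFG V}

theorem mem_aggChildren {v c : V} : c ∈ G.aggChildren v ↔ (v, c) ∈ G.A := by
  simp [aggChildren]

theorem mem_redParents {v x : V} : x ∈ G.redParents v ↔ (x, v) ∈ G.R := by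
  simp [redParents]

theorem exists_finite_edge_support (G : TFG V) :
    ∃ S : Set V, S.Finite ∧ ∀ a b, G.Edge a b → a ∈ S ∧ b ∈ S := by
  refine ⟨↑((G.R ∪ G.A).image Prod.fst ∪ (G.R ∪ G.A).image Prod.snd), finite_toSet _, ?_⟩
  intro a b hab
  have hab' : (a, b) ∈ G.R ∪ G.A := mem_union.mpr hab
  exact ⟨mem_union_left _ (mem_image_of_mem Prod.fst hab'),
    mem_union_right _ (mem_image_of_mem Prod.snd hab')⟩

open Classical in
/-- One token injected at `u` and pushed down the graph: an agglomeration node splits its share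
among its children within the capacities `s`, a redundancy node collects its parents' shares. -/
noncomputable def flow (G : TFG V) (hG : WellFounded G.Edge) (s : V → ℕ) (u : V) : V → ℕ :=
  hG.fix fun y rec =>
    if y = u then 1
    else if h : ∃ p, (p, y) ∈ G.A then
      allocate s (G.aggChildren h.choose) (rec h.choose (Or.inr h.choose_spec)) y
    else ∑ x ∈ (G.redParents y).attach, rec x.1 (Or.inl (mem_redParents.mp x.2))

variable {hG : WellFounded G.Edge} {s : V → ℕ} {u : V}

theorem flow_self : G.flow hG s u u = 1 := by
  rw [flow, WellFounded.fix_eq, if_pos rfl]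

theorem flow_of_not_mem_A {y : V} (hy : y ≠ u) (hA : ¬ ∃ p, (p, y) ∈ G.A) :
    G.flow hG s u y = ∑ x ∈ G.redParents y, G.flow hG s u x := by
  rw [flow, WellFounded.fix_eq, if_neg hy, dif_neg hA]
  exact sum_attach _ _

end TFG

namespace WellFormed

variable {G : TFG V} {E : EqSys V} {P1 P2 : Set V}

theorem kval_eq_none_of_edge (hwf : WellFormed G E P1 P2) {x y : V} (h : G.Edge x y) :
    G.kval y = none :=
  not_not.mp fun hk => hwf.T2 y hk x h

theorem kval_eq_none_of_mem_P2 (hwf : WellFormed G E P1 P2) {q : V} (hq : q ∈ P2) :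
    G.kval q = none := by
  have h : q ∈ {v | G.kval v = none} := hwf.T1 ▸ Or.inl (Or.inr hq)
  exact h

theorem mem_E_aggChildren (hwf : WellFormed G E P1 P2) {v : V} (h : (G.aggChildren v).Nonempty) :
    (v, G.aggChildren v) ∈ E :=
  (hwf.T4 v _).mp ⟨Or.inl rfl, h⟩

theorem mem_E_redParents (hwf : WellFormed G E P1 P2) {v : V} (h : (G.redParents v).Nonempty) :
    (v, G.redParents v) ∈ E :=
  (hwf.T4 v _).mp ⟨Or.inr rfl, h⟩

theorem redParents_eq_empty (hwf : WellFormed G E P1 P2) {p y : V} (hp : (p, y) ∈ G.A) :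
    G.redParents y = ∅ :=
  eq_empty_of_forall_notMem fun x hx => by
    have hxR := TFG.mem_redParents.mp hx
    obtain rfl := hwf.T3a p x y hp (Or.inl hxR)
    exact hwf.T3b x y ⟨hxR, hp⟩

theorem wellFounded_edge (hwf : WellFormed G E P1 P2) : WellFounded G.Edge :=
  let ⟨_, hS, hSE⟩ := G.exists_finite_edge_support
  wellFounded_of_acyclic hS hSE hwf.T5

theorem wellFounded_swap_edge (hwf : WellFormed G E P1 P2) : WellFounded (Function.swap G.Edge) :=
  let ⟨_, hS, hSE⟩ := G.exists_finite_edge_support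
  wellFounded_of_acyclic hS (fun a b h => (hSE b a h).symm)
    (fun a h => hwf.T5 a (transGen_swap.mp h))

variable {hG : WellFounded G.Edge} {s : V → ℕ} {u : V}

theorem flow_of_mem_A (hwf : WellFormed G E P1 P2) {p y : V} (hp : (p, y) ∈ G.A) (hy : y ≠ u) :
    G.flow hG s u y = allocate s (G.aggChildren p) (G.flow hG s u p) y := by
  have h : ∃ q, (q, y) ∈ G.A := ⟨p, hp⟩
  obtain rfl : h.choose = p := hwf.T3a p h.choose y hp (Or.inr h.choose_spec)
  rw [TFG.flow, WellFounded.fix_eq, if_neg hy, dif_pos h]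

theorem reach_of_flow_ne_zero (hwf : WellFormed G E P1 P2) {y : V} (hy : G.flow hG s u y ≠ 0) :
    G.Reach u y := by
  induction y using hG.induction with
  | _ y ih =>
  by_cases hyu : y = u
  · exact hyu ▸ ReflTransGen.refl
  by_cases hA : ∃ p, (p, y) ∈ G.A
  · obtain ⟨p, hp⟩ := hA
    rw [hwf.flow_of_mem_A hp hyu] at hy
    have hp0 : G.flow hG s u p ≠ 0 := fun h0 =>
      hy (by rw [h0]; exact allocate_zero (TFG.mem_aggChildren.mpr hp))
    exact (ih p (Or.inr hp) hp0).tail (Or.inr hp)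
  · rw [TFG.flow_of_not_mem_A hyu hA] at hy
    obtain ⟨x, hx, hx0⟩ := exists_ne_zero_of_sum_ne_zero hy
    have hxy : G.Edge x y := Or.inl (TFG.mem_redParents.mp hx)
    exact (ih x hxy hx0).tail hxy

theorem flow_eq_zero_of_edge (hwf : WellFormed G E P1 P2) {y : V} (hyu : G.Edge y u) :
    G.flow hG s u y = 0 :=
  not_not.mp fun hy => hwf.T5 y (TransGen.head' hyu (hwf.reach_of_flow_ne_zero hy))

theorem flow_eq_zero_of_isRoot (hwf : WellFormed G E P1 P2) (hu : ¬ G.IsRoot u) {r : V}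
    (hr : G.IsRoot r) : G.flow hG s u r = 0 := by
  by_contra h
  rcases (hwf.reach_of_flow_ne_zero h).cases_tail with rfl | ⟨x, -, hxr⟩
  · exact hu hr
  · exact hr x hxr

theorem flow_le (hwf : WellFormed G E P1 P2) (hs : Solves E s) (hsu : 1 ≤ s u) (y : V) :
    G.flow hG s u y ≤ s y := by
  induction y using hG.induction with
  | _ y ih =>
  by_cases hyu : y = u
  · rw [hyu, TFG.flow_self]
    exact hsu
  by_cases hA : ∃ p, (p, y) ∈ G.A
  · obtain ⟨p, hp⟩ := hA
    rw [hwf.flow_of_mem_A hp hyu]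
    exact allocate_le _ _ _ y
  · rw [TFG.flow_of_not_mem_A hyu hA]
    rcases (G.redParents y).eq_empty_or_nonempty with he | hne
    · simp [he]
    · rw [hs _ (hwf.mem_E_redParents hne)]
      exact sum_le_sum fun x hx => ih x (Or.inl (TFG.mem_redParents.mp hx))

theorem sum_flow_eq (hwf : WellFormed G E P1 P2) (hs : Solves E s) {v : V} (hvu : (v, u) ∈ G.A)
    (hsu : 1 ≤ s u) {x : V} {X : Finset V} (he : (x, X) ∈ E) :
    ∑ y ∈ X, G.flow hG s u y = G.flow hG s u x + if x = v ∧ X = G.aggChildren v then 1 else 0 := by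
  obtain ⟨hform, hX⟩ := (hwf.T4 x X).mpr he
  by_cases hagg : X = G.aggChildren x
  · subst hagg
    by_cases hxv : x = v
    · subst hxv
      have hx0 : G.flow hG s u x = 0 := hwf.flow_eq_zero_of_edge (Or.inr hvu)
      rw [if_pos ⟨rfl, rfl⟩, hx0, sum_eq_single_of_mem u (TFG.mem_aggChildren.mpr hvu),
        TFG.flow_self]
      intro c hc hcu
      rw [hwf.flow_of_mem_A (TFG.mem_aggChildren.mp hc) hcu, hx0, allocate_zero hc]
    · have hu : ∀ c ∈ G.aggChildren x, c ≠ u := by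
        rintro c hc rfl
        exact hxv (hwf.T3a v x c hvu (Or.inr (TFG.mem_aggChildren.mp hc)))
      rw [if_neg fun h => hxv h.1, add_zero,
        sum_congr rfl fun c hc => hwf.flow_of_mem_A (TFG.mem_aggChildren.mp hc) (hu c hc),
        sum_allocate, min_eq_left ((hwf.flow_le hs hsu x).trans_eq (hs _ he))]
  · obtain rfl : X = G.redParents x := hform.resolve_left hagg
    have hA : ¬ ∃ p, (p, x) ∈ G.A := fun ⟨p, hp⟩ => hX.ne_empty (hwf.redParents_eq_empty hp)
    have hxu : x ≠ u := fun h => hA ⟨v, h ▸ hvu⟩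
    have hnot : ¬ (x = v ∧ G.redParents x = G.aggChildren v) := fun h => hagg (h.1 ▸ h.2)
    rw [if_neg hnot, add_zero, TFG.flow_of_not_mem_A hxu hA]

theorem reach_or_reach_of_aggPath (hwf : WellFormed G E P1 P2) {a b l : V}
    (hal : ReflTransGen (fun x y => (x, y) ∈ G.A) a l) (hbl : G.Reach b l) :
    G.Reach b a ∨ G.Reach a b := by
  induction hal with
  | refl => exact Or.inl hbl
  | tail hal' hstep ih =>
    rcases hbl.cases_tail with rfl | ⟨x, hbx, hxl⟩
    · exact Or.inr ((ReflTransGen.mono (fun _ _ h => Or.inr h) _ _ hal').tail (Or.inr hstep))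
    · exact ih (hwf.T3a _ x _ hstep hxl ▸ hbx)

theorem eq_of_reach_of_mem_A (hwf : WellFormed G E P1 P2) {v w1 w2 : V} (h1 : (v, w1) ∈ G.A)
    (h2 : (v, w2) ∈ G.A) (h : G.Reach w1 w2) : w1 = w2 := by
  rcases h.cases_tail with h | ⟨x, hx, hxw2⟩
  · exact h.symm
  · obtain rfl := hwf.T3a v x w2 h2 hxw2
    exact (hwf.T5 x (TransGen.head' (Or.inr h1) hx)).elim

theorem exists_mem_P1_aggPath (hwf : WellFormed G E P1 P2) {f : V → ℕ}
    (hf : ∀ x, (G.aggChildren x).Nonempty → f x ≤ ∑ c ∈ G.aggChildren x, f c) {x : V}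
    (hx : G.kval x = none) (hfx : 1 ≤ f x) :
    ∃ l ∈ P1, 1 ≤ f l ∧ ReflTransGen (fun a b => (a, b) ∈ G.A) x l := by
  induction x using hwf.wellFounded_swap_edge.induction with
  | _ x ih =>
  rcases (G.aggChildren x).eq_empty_or_nonempty with he | hne
  · have hleaf : G.IsCircLeaf x := fun w hw => by
      simpa [he] using TFG.mem_aggChildren.mpr hw
    exact ⟨x, (hwf.T6leaf x hx).mp hleaf, hfx, ReflTransGen.refl⟩
  · have hsum : ∑ c ∈ G.aggChildren x, f c ≠ 0 := by
      have := hf x hne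
      omega
    obtain ⟨c, hc, hfc⟩ := exists_ne_zero_of_sum_ne_zero hsum
    have hxc : (x, c) ∈ G.A := TFG.mem_aggChildren.mp hc
    obtain ⟨l, hl, hfl, hcl⟩ :=
      ih c (Or.inr hxc) (hwf.kval_eq_none_of_edge (Or.inr hxc)) (Nat.one_le_iff_ne_zero.mpr hfc)
    exact ⟨l, hl, hfl, ReflTransGen.head hxc hcl⟩

theorem exists_siblings_pos (hwf : WellFormed G E P1 P2) (hs : Solves E s)
    (hP1 : ∀ a ∈ P1, s a ≤ 1) {x : V} (hx : G.kval x = none) (h2 : 2 ≤ s x) :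
    ∃ v w1 w2, (v, w1) ∈ G.A ∧ (v, w2) ∈ G.A ∧ w1 ≠ w2 ∧ 1 ≤ s w1 ∧ 1 ≤ s w2 := by
  by_contra! hno
  -- Without two marked siblings, the surplus `s - 1` is passed on undiminished to a child.
  have hf : ∀ y, (G.aggChildren y).Nonempty →
      s y - 1 ≤ ∑ c ∈ G.aggChildren y, (s c - 1) := by
    intro y hy
    rw [hs _ (hwf.mem_E_aggChildren hy)]
    by_cases hpos : ∃ c ∈ G.aggChildren y, 1 ≤ s c
    · obtain ⟨c, hc, hsc⟩ := hpos
      rw [sum_eq_single_of_mem c hc fun b hb hbc => Nat.lt_one_iff.mp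
        (hno y c b (TFG.mem_aggChildren.mp hc) (TFG.mem_aggChildren.mp hb) hbc.symm hsc)]
      exact single_le_sum (f := fun c => s c - 1) (fun _ _ => Nat.zero_le _) hc
    · push Not at hpos
      rw [sum_eq_zero fun c hc => Nat.lt_one_iff.mp (hpos c hc)]
      exact Nat.zero_le _
  obtain ⟨l, hl, hsl, -⟩ := hwf.exists_mem_P1_aggPath hf hx (by omega)
  have := hP1 l hl
  omega

theorem solves_add_flow_tsub_flow (hwf : WellFormed G E P1 P2) (hs : Solves E s) {v w1 w2 : V}
    (h1 : (v, w1) ∈ G.A) (h2 : (v, w2) ∈ G.A) (hs1 : 1 ≤ s w1) (hs2 : 1 ≤ s w2) :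
    Solves E fun y => s y + G.flow hG s w1 y - G.flow hG s w2 y := by
  rintro ⟨x, X⟩ he
  have hX := hs _ he
  have hw1 := hwf.sum_flow_eq (hG := hG) hs h1 hs1 he
  have hw2 := hwf.sum_flow_eq (hG := hG) hs h2 hs2 he
  have hle := hwf.flow_le (hG := hG) hs hs2
  have := hle x
  dsimp only at hX hw1 hw2 ⊢
  rw [sum_tsub_distrib X fun y _ => (hle y).trans (Nat.le_add_right _ _), sum_add_distrib]
  omega

theorem exists_solution_two_le (hwf : WellFormed G E P1 P2) (hs : Solves E s) {x : V}
    (hx : G.kval x = none) (h2 : 2 ≤ s x) :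
    ∃ s', Solves E s' ∧ (∀ q ∈ P2, s' q = s q) ∧ ∃ l ∈ P1, 2 ≤ s' l := by
  by_cases hP1 : ∀ a ∈ P1, s a ≤ 1
  swap
  · push Not at hP1
    obtain ⟨l, hl, hsl⟩ := hP1
    exact ⟨s, hs, fun _ _ => rfl, l, hl, hsl⟩
  obtain ⟨v, w1, w2, h1, h2, hne, hs1, hs2⟩ := hwf.exists_siblings_pos hs hP1 hx h2
  have hG : WellFounded G.Edge := hwf.wellFounded_edge
  refine ⟨_, hwf.solves_add_flow_tsub_flow (hG := hG) hs h1 h2 hs1 hs2, fun q hq => ?_, ?_⟩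
  · have hroot : G.IsRoot q := (hwf.T6root q (hwf.kval_eq_none_of_mem_P2 hq)).mpr hq
    simp only [hwf.flow_eq_zero_of_isRoot (fun h => h v (Or.inr h1)) hroot,
      hwf.flow_eq_zero_of_isRoot (fun h => h v (Or.inr h2)) hroot, add_zero, Nat.sub_zero]
  · have hf : ∀ y, (G.aggChildren y).Nonempty →
        G.flow hG s w1 y ≤ ∑ c ∈ G.aggChildren y, G.flow hG s w1 c := fun y hy =>
      (hwf.sum_flow_eq hs h1 hs1 (hwf.mem_E_aggChildren hy)).ge.trans' le_self_add
    obtain ⟨l, hl, hw1l, hpath⟩ :=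
      hwf.exists_mem_P1_aggPath hf (hwf.kval_eq_none_of_edge (Or.inr h1)) TFG.flow_self.ge
    -- `l` lies on an agglomeration path below `w1`, hence not below its sibling `w2`.
    have hw2l : G.flow hG s w2 l = 0 := by
      by_contra h
      rcases hwf.reach_or_reach_of_aggPath hpath (hwf.reach_of_flow_ne_zero h) with h21 | h12
      · exact hne (hwf.eq_of_reach_of_mem_A h2 h1 h21).symm
      · exact hne (hwf.eq_of_reach_of_mem_A h1 h2 h12)
    have := hwf.flow_le (hG := hG) hs hs1 l
    exact ⟨l, hl, by omega⟩

end WellFormed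

theorem EEquiv.le_one_of_solves {V : Type} {E : EqSys V} {P1 P2 : Set V} {N1 : PetriNet ↥P1}
    {m1 : ↥P1 → ℕ} {N2 : PetriNet ↥P2} {m2 : ↥P2 → ℕ} (heq : EEquiv E P1 P2 N1 m1 N2 m2)
    (hsafe : N1.Safe m1) {m : ↥P2 → ℕ} (hm : N2.reach m2 m) {s : V → ℕ} (hs : Solves E s)
    (hsm : AgreesOn s P2 m) : ∀ a ∈ P1, s a ≤ 1 :=
  fun a ha => hsafe _ ((heq.A3 (fun a => s a) m ⟨s, hs, fun _ => rfl, hsm⟩).mpr hm) ⟨a, ha⟩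

theorem safeness_preservation_general {V : Type} [DecidableEq V] (G : TFG V) (E : EqSys V)
    (P1 P2 : Set V)
    (N1 : PetriNet ↥P1) (m1 : ↥P1 → ℕ) (N2 : PetriNet ↥P2) (m2 : ↥P2 → ℕ)
    (hwf : WellFormed G E P1 P2) (heq : EEquiv E P1 P2 N1 m1 N2 m2) (hsafe : N1.Safe m1) :
    N2.Safe m2 := by
  intro m hm p
  by_contra! hp
  obtain ⟨s, hs, hsm⟩ := heq.A1r m hm
  obtain ⟨s', hs', hs'P2, l, hl, hs'l⟩ :=
    hwf.exists_solution_two_le hs (hwf.kval_eq_none_of_mem_P2 p.2) (by rw [hsm p]; omega)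
  have := heq.le_one_of_solves hsafe hm hs' (fun q => (hs'P2 q q.2).trans (hsm q)) l hl
  omega

theorem safeness_preservation {V : Type} [DecidableEq V] (G : TFG V) (E : EqSys V)
    (P1 P2 : Set V) [DecidablePred (· ∈ P1)] [DecidablePred (· ∈ P2)]
    (N1 : PetriNet ↥P1) (m1 : ↥P1 → ℕ) (N2 : PetriNet ↥P2) (m2 : ↥P2 → ℕ)
    (hwf : WellFormed G E P1 P2) (heq : EEquiv E P1 P2 N1 m1 N2 m2) (hsafe : N1.Safe m1) :
    N2.Safe m2 :=
  safeness_preservation_general G E P1 P2 N1 m1 N2 m2 hwf heq hsafe
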